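/- arXiv:2307.05125 — 10 statements merged into one kernel-verified Lean document; each statement's English description precedes it below -/
import Mathlib

section
/- Let n be a positive integer, let φ : {0,1}^n → ℝ be any function, and let G = (V, E) be an order of the n binary variables (a directed acyclic graph on vertex set {1,…,n}) that is valid with respect to minimization of φ, i.e., min over x ∈ {0,1}^n of φ(x) equals min over x ∈ B_n^G of φ(x). Then for every nonnegative function c : E × {0,1}^n → ℝ, the minimum over x ∈ {0,1}^n of φ(x) + Σ_{(i,j)∈E} c((i,j), x)·(x_i − x_i·x_j) equals the minimum over x ∈ {0,1}^n of φ(x). -/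
open Finset

/-- The set of binary vectors `{0,1}^n`, as real vectors. -/
def Bset (n : ℕ) : Set (Fin n → ℝ) := {x | ∀ i, x i = 0 ∨ x i = 1}

/-- The subset of `{0,1}^n` ordered by an edge set `E`:
`x_i = 1` implies `x_j = 1` for every edge `(i,j) ∈ E`. -/
def BsetG (n : ℕ) (E : Finset (Fin n × Fin n)) : Set (Fin n → ℝ) :=
  {x | x ∈ Bset n ∧ ∀ e ∈ E, x e.1 = 1 → x e.2 = 1}

/-- The directed graph on `{1,…,n}` with edge set `E` has no directed cycle. -/
def IsAcyclicEdges (n : ℕ) (E : Finset (Fin n × Fin n)) : Prop :=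
  ∀ i : Fin n, ¬ Relation.TransGen (fun a b => (a, b) ∈ E) i i

theorem stmt0 (n : ℕ) (hn : 0 < n) (φ : (Fin n → ℝ) → ℝ)
    (E : Finset (Fin n × Fin n)) (hdag : IsAcyclicEdges n E)
    (hvalid : sInf (φ '' Bset n) = sInf (φ '' BsetG n E))
    (c : Fin n × Fin n → (Fin n → ℝ) → ℝ)
    (hc : ∀ e ∈ E, ∀ x ∈ Bset n, 0 ≤ c e x) :
    sInf ((fun x => φ x + ∑ e ∈ E, c e x * (x e.1 - x e.1 * x e.2)) '' Bset n)
      = sInf (φ '' Bset n) := by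
  set ψ : (Fin n → ℝ) → ℝ := fun x => φ x + ∑ e ∈ E, c e x * (x e.1 - x e.1 * x e.2)
    with hψ
  have hBfin : (Bset n).Finite := by
    have hpi : (Set.univ.pi fun _ : Fin n => ({0, 1} : Set ℝ)).Finite :=
      Set.Finite.pi fun _ => (Set.finite_singleton (1:ℝ)).insert 0
    refine hpi.subset fun x hx i _ => ?_
    rcases hx i with h | h <;> simp [h]
  have hB0 : (fun _ => (0:ℝ)) ∈ Bset n := fun i => Or.inl rfl
  have hBG0 : (fun _ => (0:ℝ)) ∈ BsetG n E :=
    ⟨hB0, fun e _ h => absurd h (by norm_num)⟩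
  have hne1 : (ψ '' Bset n).Nonempty := ⟨_, _, hB0, rfl⟩
  have hne3 : (φ '' BsetG n E).Nonempty := ⟨_, _, hBG0, rfl⟩
  have hbdd1 : BddBelow (ψ '' Bset n) := (hBfin.image _).bddBelow
  have hbdd2 : BddBelow (φ '' Bset n) := (hBfin.image _).bddBelow
  have hpen : ∀ x ∈ Bset n, φ x ≤ ψ x := by
    intro x hx
    have hs : 0 ≤ ∑ e ∈ E, c e x * (x e.1 - x e.1 * x e.2) := by
      refine Finset.sum_nonneg fun e he => mul_nonneg (hc e he x hx) ?_
      rcases hx e.1 with h | h <;> rcases hx e.2 with h' | h' <;> simp [h, h']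
    simp only [hψ]
    linarith
  apply le_antisymm
  · rw [hvalid]
    refine le_csInf hne3 ?_
    rintro b ⟨x, hx, rfl⟩
    have hψx : ψ x = φ x := by
      have hz : ∑ e ∈ E, c e x * (x e.1 - x e.1 * x e.2) = 0 := by
        refine Finset.sum_eq_zero fun e he => ?_
        rcases hx.1 e.1 with h | h
        · simp [h]
        · rw [hx.2 e he h, h]; ring
      simp only [hψ, hz, add_zero]
    calc sInf (ψ '' Bset n) ≤ ψ x := csInf_le hbdd1 ⟨x, hx.1, rfl⟩
      _ = φ x := hψx
  · refine le_csInf hne1 ?_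
    rintro b ⟨x, hx, rfl⟩
    exact le_trans (csInf_le hbdd2 ⟨x, hx, rfl⟩) (hpen x hx)
end

section
/- Let n be a positive integer, let φ : {0,1}^n → ℝ be any function, let G = (V, E) be an order of the n binary variables that is valid with respect to minimization of φ, and let c : E × {0,1}^n → ℝ be nonnegative. If x* ∈ {0,1}^n attains the minimum of the penalized objective ψ(x) := φ(x) + Σ_{(i,j)∈E} c((i,j), x)·(x_i − x_i·x_j) over {0,1}^n, then x* also attains the minimum of φ over {0,1}^n. -/
open Finset

theorem stmt1 (n : ℕ) (hn : 0 < n) (φ : (Fin n → ℝ) → ℝ)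
    (E : Finset (Fin n × Fin n)) (hdag : IsAcyclicEdges n E)
    (hvalid : sInf (φ '' Bset n) = sInf (φ '' BsetG n E))
    (c : Fin n × Fin n → (Fin n → ℝ) → ℝ)
    (hc : ∀ e ∈ E, ∀ x ∈ Bset n, 0 ≤ c e x)
    (xstar : Fin n → ℝ) (hxstar : xstar ∈ Bset n)
    (hmin : ∀ x ∈ Bset n,
      (φ xstar + ∑ e ∈ E, c e xstar * (xstar e.1 - xstar e.1 * xstar e.2)) ≤
        (φ x + ∑ e ∈ E, c e x * (x e.1 - x e.1 * x e.2))) :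
    ∀ x ∈ Bset n, φ xstar ≤ φ x := by
  -- penalty of xstar is nonnegative
  have hpen_star : 0 ≤ ∑ e ∈ E, c e xstar * (xstar e.1 - xstar e.1 * xstar e.2) := by
    apply Finset.sum_nonneg
    intro e he
    apply mul_nonneg (hc e he xstar hxstar)
    rcases hxstar e.1 with h1 | h1 <;> rcases hxstar e.2 with h2 | h2 <;>
      rw [h1, h2] <;> norm_num
  -- φ xstar ≤ φ x on BsetG
  have hG : ∀ x ∈ BsetG n E, φ xstar ≤ φ x := by
    intro x hx
    obtain ⟨hxB, hxE⟩ := hx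
    have hpen_x : ∑ e ∈ E, c e x * (x e.1 - x e.1 * x e.2) = 0 := by
      apply Finset.sum_eq_zero
      intro e he
      rcases hxB e.1 with h1 | h1
      · rw [h1]; ring
      · rw [h1, hxE e he h1]; ring
    have := hmin x hxB
    rw [hpen_x, add_zero] at this
    linarith
  -- BsetG is nonempty (zero vector)
  have hzero : (fun _ => (0:ℝ)) ∈ BsetG n E := by
    refine ⟨fun i => Or.inl rfl, fun e _ h => ?_⟩
    simp at h
  -- φ xstar ≤ sInf (φ '' BsetG)
  have hle : φ xstar ≤ sInf (φ '' BsetG n E) := by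
    apply le_csInf ⟨φ (fun _ => 0), Set.mem_image_of_mem φ hzero⟩
    rintro b ⟨y, hy, rfl⟩
    exact hG y hy
  -- Bset is finite
  have hfin : (Bset n).Finite := by
    apply Set.Finite.subset (Set.Finite.pi (fun i : Fin n => (Set.finite_singleton (0:ℝ)).insert 1))
    intro x hx i _
    rcases hx i with h | h <;> simp [h]
  intro x hx
  have hbdd : BddBelow (φ '' Bset n) := (hfin.image φ).bddBelow
  have h2 : sInf (φ '' Bset n) ≤ φ x := csInf_le hbdd ⟨x, hx, rfl⟩
  calc φ xstar ≤ sInf (φ '' BsetG n E) := hle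
    _ = sInf (φ '' Bset n) := hvalid.symm
    _ ≤ φ x := h2
end

section
/- Let Q ∈ ℝ^{n×n} be an upper-triangular matrix and G = (V, E) an order of n binary variables. Define, for each i, U_i^+ := { j : (i,j) ∈ E and Q_{i,j} > 0 } and U_i^- := { j : (i,j) ∈ E and Q_{j,i} > 0 }, and let Q^G be the linearized matrix given by Q^G_{i,j} = 0 if j ∈ U_i^+ or i ∈ U_j^-, Q^G_{i,i} = Q_{i,i} + Σ_{j ∈ U_i^+} Q_{i,j} + Σ_{j ∈ U_i^-} Q_{j,i}, and Q^G_{i,j} = Q_{i,j} otherwise. Define c((i,j), x) := Q_{i,j} if i < j and Q_{i,j} > 0, c((i,j), x) := Q_{j,i} if i > j and Q_{j,i} > 0, and c((i,j), x) := 0 otherwise. Then for every x ∈ {0,1}^n, the identity x^⊤ Q x + Σ_{(i,j)∈E} c((i,j), x)·(x_i − x_i·x_j) = x^⊤ Q^G x holds. -/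
open Finset

/-- Quadratic form `x ⊤ Q x = ∑ i ∑ j Q i j * x i * x j`. -/
def quadForm (n : ℕ) (Q : Matrix (Fin n) (Fin n) ℝ) (x : Fin n → ℝ) : ℝ :=
  ∑ i, ∑ j, Q i j * x i * x j

/-- Linearization `Q^G` of `Q` with respect to the order with edge set `E`:
off-diagonal entries with `j ∈ U_i^+` (i.e. `(i,j) ∈ E` and `Q i j > 0`) or
`i ∈ U_j^-` (i.e. `(j,i) ∈ E` and `Q i j > 0`) are zeroed, and the diagonal
entry `Q i i` absorbs `∑_{j ∈ U_i^+} Q i j + ∑_{j ∈ U_i^-} Q j i`. -/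
noncomputable def linQ (n : ℕ) (E : Finset (Fin n × Fin n))
    (Q : Matrix (Fin n) (Fin n) ℝ) : Matrix (Fin n) (Fin n) ℝ := fun i j =>
  if i = j then
    Q i i + (∑ j' ∈ univ.filter (fun j' => (i, j') ∈ E ∧ 0 < Q i j'), Q i j')
          + (∑ j' ∈ univ.filter (fun j' => (i, j') ∈ E ∧ 0 < Q j' i), Q j' i)
  else if ((i, j) ∈ E ∧ 0 < Q i j) ∨ ((j, i) ∈ E ∧ 0 < Q i j) then 0
  else Q i j

/-- Penalty coefficient `c((i,j), x)`: `Q i j` if `i < j` and `Q i j > 0`,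
`Q j i` if `i > j` and `Q j i > 0`, and `0` otherwise. -/
noncomputable def penCoef (n : ℕ) (Q : Matrix (Fin n) (Fin n) ℝ)
    (e : Fin n × Fin n) : ℝ :=
  if e.1 < e.2 ∧ 0 < Q e.1 e.2 then Q e.1 e.2
  else if e.2 < e.1 ∧ 0 < Q e.2 e.1 then Q e.2 e.1
  else 0

lemma sumE {n : ℕ} (E : Finset (Fin n × Fin n)) (P : Fin n × Fin n → Prop) [DecidablePred P]
    (f : Fin n × Fin n → ℝ) :
    ∑ i : Fin n, ∑ j : Fin n, (if (i, j) ∈ E ∧ P (i, j) then f (i, j) else 0)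
      = ∑ e ∈ E, if P e then f e else 0 := by
  classical
  have step : (∑ i : Fin n, ∑ j : Fin n, if (i, j) ∈ E ∧ P (i, j) then f (i, j) else 0)
      = ∑ p : Fin n × Fin n, (if p ∈ E ∧ P p then f p else 0) :=
    (Fintype.sum_prod_type (f := fun p : Fin n × Fin n => if p ∈ E ∧ P p then f p else 0)).symm
  rw [step]
  have h : ∀ p : Fin n × Fin n, (if p ∈ E ∧ P p then f p else 0)
      = if p ∈ E then (if P p then f p else 0) else 0 := by
    intro p; by_cases h1 : p ∈ E <;> by_cases h2 : P p <;> simp [h1, h2]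
  simp_rw [h]
  rw [Finset.sum_ite_mem, Finset.univ_inter]

theorem stmt2 (n : ℕ) (Q : Matrix (Fin n) (Fin n) ℝ)
    (hupper : ∀ i j : Fin n, j < i → Q i j = 0)
    (E : Finset (Fin n × Fin n)) (hdag : IsAcyclicEdges n E) :
    ∀ x ∈ Bset n,
      quadForm n Q x + ∑ e ∈ E, penCoef n Q e * (x e.1 - x e.1 * x e.2)
        = quadForm n (linQ n E Q) x := by
  classical
  intro x hx
  have hxx : ∀ i, x i * x i = x i := fun i => by rcases hx i with h | h <;> rw [h] <;> ring
  have hnb : ∀ i j : Fin n, (i, j) ∈ E → (j, i) ∈ E → False := fun i j h1 h2 =>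
    hdag i (Relation.TransGen.head h1 (Relation.TransGen.single h2))
  have hne : ∀ e ∈ E, e.1 ≠ e.2 := by
    rintro ⟨a, b⟩ he h
    simp only at h
    subst h
    exact hdag a (Relation.TransGen.single he)
  set S : Fin n → ℝ := fun i =>
    (∑ j' ∈ univ.filter (fun j' => (i, j') ∈ E ∧ 0 < Q i j'), Q i j')
      + (∑ j' ∈ univ.filter (fun j' => (i, j') ∈ E ∧ 0 < Q j' i), Q j' i) with hS
  have hpt : ∀ i j : Fin n, linQ n E Q i j * x i * x j
      = Q i j * x i * x j
        + (if j = i then S i * (x i * x j) else 0)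
        + (if (i, j) ∈ E ∧ (i ≠ j ∧ 0 < Q i j) then -(Q i j * x i * x j) else 0)
        + (if (j, i) ∈ E ∧ (i ≠ j ∧ 0 < Q i j) then -(Q i j * x i * x j) else 0) := by
    intro i j
    unfold linQ
    by_cases hij : i = j
    · subst hij
      have h2 : ¬ ((i, i) ∈ E ∧ (i ≠ i ∧ 0 < Q i i)) := by tauto
      rw [if_pos rfl, if_pos rfl, if_neg h2]
      simp only [hS]
      ring
    · have hji : ¬ j = i := fun h => hij h.symm
      rw [if_neg hij]
      by_cases hc : ((i, j) ∈ E ∧ 0 < Q i j) ∨ ((j, i) ∈ E ∧ 0 < Q i j)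
      · rw [if_pos hc]
        rcases hc with ⟨hE, hQ⟩ | ⟨hE, hQ⟩
        · have h3 : ¬ ((j, i) ∈ E ∧ (i ≠ j ∧ 0 < Q i j)) := fun h => hnb i j hE h.1
          rw [if_neg hji, if_pos ⟨hE, hij, hQ⟩, if_neg h3]; ring
        · have h2 : ¬ ((i, j) ∈ E ∧ (i ≠ j ∧ 0 < Q i j)) := fun h => hnb i j h.1 hE
          rw [if_neg hji, if_neg h2, if_pos ⟨hE, hij, hQ⟩]; ring
      · rw [if_neg hc]
        have h2 : ¬ ((i, j) ∈ E ∧ (i ≠ j ∧ 0 < Q i j)) := fun h => hc (Or.inl ⟨h.1, h.2.2⟩)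
        have h3 : ¬ ((j, i) ∈ E ∧ (i ≠ j ∧ 0 < Q i j)) := fun h => hc (Or.inr ⟨h.1, h.2.2⟩)
        rw [if_neg hji, if_neg h2, if_neg h3]; ring
  have hsplit : quadForm n (linQ n E Q) x
      = quadForm n Q x
        + (∑ i, S i * (x i * x i))
        + (∑ e ∈ E, if e.1 ≠ e.2 ∧ 0 < Q e.1 e.2 then -(Q e.1 e.2 * x e.1 * x e.2) else 0)
        + (∑ e ∈ E, if e.2 ≠ e.1 ∧ 0 < Q e.2 e.1 then -(Q e.2 e.1 * x e.2 * x e.1) else 0) := by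
    unfold quadForm
    calc ∑ i, ∑ j, linQ n E Q i j * x i * x j
        = ∑ i, ∑ j, (Q i j * x i * x j
            + (if j = i then S i * (x i * x j) else 0)
            + (if (i, j) ∈ E ∧ (i ≠ j ∧ 0 < Q i j) then -(Q i j * x i * x j) else 0)
            + (if (j, i) ∈ E ∧ (i ≠ j ∧ 0 < Q i j) then -(Q i j * x i * x j) else 0)) :=
          Finset.sum_congr rfl fun i _ => Finset.sum_congr rfl fun j _ => hpt i j
      _ = (∑ i, ∑ j, Q i j * x i * x j)
            + (∑ i, ∑ j, if j = i then S i * (x i * x j) else 0)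
            + (∑ i, ∑ j, if (i, j) ∈ E ∧ (i ≠ j ∧ 0 < Q i j) then -(Q i j * x i * x j) else 0)
            + (∑ i, ∑ j, if (j, i) ∈ E ∧ (i ≠ j ∧ 0 < Q i j) then -(Q i j * x i * x j) else 0) := by
          simp only [Finset.sum_add_distrib]
      _ = _ := by
          congr 1
          · congr 1
            · congr 1
              exact Finset.sum_congr rfl fun i _ => by
                rw [Finset.sum_ite_eq' univ i (fun j => S i * (x i * x j))]
                simp
            · exact sumE E (fun e => e.1 ≠ e.2 ∧ 0 < Q e.1 e.2)
                (fun e => -(Q e.1 e.2 * x e.1 * x e.2))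
          · rw [Finset.sum_comm]
            exact sumE E (fun e => e.2 ≠ e.1 ∧ 0 < Q e.2 e.1)
              (fun e => -(Q e.2 e.1 * x e.2 * x e.1))
  have hdiag : ∑ i, S i * (x i * x i)
      = (∑ e ∈ E, if 0 < Q e.1 e.2 then Q e.1 e.2 * (x e.1 * x e.1) else 0)
        + (∑ e ∈ E, if 0 < Q e.2 e.1 then Q e.2 e.1 * (x e.1 * x e.1) else 0) := by
    have h : ∀ i, S i * (x i * x i)
        = (∑ j, if (i, j) ∈ E ∧ 0 < Q i j then Q i j * (x i * x i) else 0)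
          + (∑ j, if (i, j) ∈ E ∧ 0 < Q j i then Q j i * (x i * x i) else 0) := by
      intro i
      rw [hS]
      simp only [add_mul, Finset.sum_mul, Finset.sum_filter]
      congr 1 <;> exact Finset.sum_congr rfl fun j _ => by split_ifs <;> ring
    calc ∑ i, S i * (x i * x i)
        = ∑ i, ((∑ j, if (i, j) ∈ E ∧ 0 < Q i j then Q i j * (x i * x i) else 0)
            + (∑ j, if (i, j) ∈ E ∧ 0 < Q j i then Q j i * (x i * x i) else 0)) :=
          Finset.sum_congr rfl fun i _ => h i
      _ = (∑ i, ∑ j, if (i, j) ∈ E ∧ 0 < Q i j then Q i j * (x i * x i) else 0)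
            + (∑ i, ∑ j, if (i, j) ∈ E ∧ 0 < Q j i then Q j i * (x i * x i) else 0) :=
          Finset.sum_add_distrib
      _ = _ := by
          congr 1
          · exact sumE E (fun e => 0 < Q e.1 e.2) (fun e => Q e.1 e.2 * (x e.1 * x e.1))
          · exact sumE E (fun e => 0 < Q e.2 e.1) (fun e => Q e.2 e.1 * (x e.1 * x e.1))
  have ht2 : (∑ e ∈ E, if e.1 ≠ e.2 ∧ 0 < Q e.1 e.2 then -(Q e.1 e.2 * x e.1 * x e.2) else 0)
      = ∑ e ∈ E, if 0 < Q e.1 e.2 then -(Q e.1 e.2 * x e.1 * x e.2) else 0 :=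
    Finset.sum_congr rfl fun e he => by
      have := hne e he
      by_cases h : 0 < Q e.1 e.2 <;> simp [h, this]
  have ht3 : (∑ e ∈ E, if e.2 ≠ e.1 ∧ 0 < Q e.2 e.1 then -(Q e.2 e.1 * x e.2 * x e.1) else 0)
      = ∑ e ∈ E, if 0 < Q e.2 e.1 then -(Q e.2 e.1 * x e.2 * x e.1) else 0 :=
    Finset.sum_congr rfl fun e he => by
      have := (hne e he).symm
      by_cases h : 0 < Q e.2 e.1 <;> simp [h, this]
  have hper : ∀ e ∈ E, penCoef n Q e * (x e.1 - x e.1 * x e.2)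
      = ((if 0 < Q e.1 e.2 then Q e.1 e.2 * (x e.1 * x e.1) else 0)
        + (if 0 < Q e.2 e.1 then Q e.2 e.1 * (x e.1 * x e.1) else 0))
        + (if 0 < Q e.1 e.2 then -(Q e.1 e.2 * x e.1 * x e.2) else 0)
        + (if 0 < Q e.2 e.1 then -(Q e.2 e.1 * x e.2 * x e.1) else 0) := by
    intro e he
    have hne' := hne e he
    unfold penCoef
    by_cases h1 : 0 < Q e.1 e.2
    · have hlt : e.1 < e.2 := by
        rcases lt_trichotomy e.1 e.2 with h | h | h
        · exact h
        · exact absurd h hne'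
        · exact absurd (hupper e.1 e.2 h) (ne_of_gt h1)
      have h2 : ¬ 0 < Q e.2 e.1 := by rw [hupper e.2 e.1 hlt]; exact lt_irrefl 0
      rw [if_pos ⟨hlt, h1⟩, if_pos h1, if_neg h2, if_pos h1, if_neg h2, hxx e.1]; ring
    · by_cases h2 : 0 < Q e.2 e.1
      · have hlt : e.2 < e.1 := by
          rcases lt_trichotomy e.2 e.1 with h | h | h
          · exact h
          · exact absurd h hne'.symm
          · exact absurd (hupper e.2 e.1 h) (ne_of_gt h2)
        have hn1 : ¬ (e.1 < e.2 ∧ 0 < Q e.1 e.2) := fun h => h1 h.2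
        rw [if_neg hn1, if_pos ⟨hlt, h2⟩, if_neg h1, if_pos h2, if_neg h1, if_pos h2, hxx e.1]
        ring
      · rw [if_neg (fun h => h1 h.2), if_neg (fun h => h2 h.2), if_neg h1, if_neg h2,
          if_neg h1, if_neg h2]
        ring
  rw [hsplit, hdiag, ht2, ht3, Finset.sum_congr rfl hper]
  simp only [Finset.sum_add_distrib]
  ring
end

section
/- Let Q ∈ ℝ^{n×n} be an upper-triangular matrix and let G = (V, E) be an order of n binary variables that is valid with respect to minimization of φ(x) = x^⊤ Q x. Let Q^G be the linearization of Q with respect to G, defined by: U_i^+ := { j : (i,j) ∈ E and Q_{i,j} > 0 }, U_i^- := { j : (i,j) ∈ E and Q_{j,i} > 0 }, Q^G_{i,j} = 0 if j ∈ U_i^+ or i ∈ U_j^-, Q^G_{i,i} = Q_{i,i} + Σ_{j ∈ U_i^+} Q_{i,j} + Σ_{j ∈ U_i^-} Q_{j,i}, and Q^G_{i,j} = Q_{i,j} otherwise. Then min over x ∈ {0,1}^n of x^⊤ Q x equals min over x ∈ {0,1}^n of x^⊤ Q^G x. -/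
open Finset

/- ### Auxiliary lemmas -/

lemma edge_ne {n : ℕ} {E : Finset (Fin n × Fin n)} (hdag : IsAcyclicEdges n E)
    {i j : Fin n} (h : (i, j) ∈ E) : i ≠ j := by
  rintro rfl
  exact hdag i (Relation.TransGen.single h)

lemma edge_asymm {n : ℕ} {E : Finset (Fin n × Fin n)} (hdag : IsAcyclicEdges n E)
    {i j : Fin n} (h1 : (i, j) ∈ E) (h2 : (j, i) ∈ E) : False :=
  hdag i (Relation.TransGen.head h1 (Relation.TransGen.single h2))

lemma linQ_decomp (n : ℕ) (E : Finset (Fin n × Fin n)) (Q : Matrix (Fin n) (Fin n) ℝ)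
    (i j : Fin n) :
    linQ n E Q i j = Q i j
      + (if i = j then (∑ j' ∈ univ.filter (fun j' => (i, j') ∈ E ∧ 0 < Q i j'), Q i j')
                    + (∑ j' ∈ univ.filter (fun j' => (i, j') ∈ E ∧ 0 < Q j' i), Q j' i) else 0)
      + (if (((i, j) ∈ E ∧ 0 < Q i j) ∨ ((j, i) ∈ E ∧ 0 < Q i j)) ∧ i ≠ j
          then -Q i j else 0) := by
  unfold linQ
  by_cases h : i = j
  · subst h
    have hne : ¬((((i, i) ∈ E ∧ 0 < Q i i) ∨ ((i, i) ∈ E ∧ 0 < Q i i)) ∧ i ≠ i) := by simp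
    rw [if_pos rfl, if_pos rfl, if_neg hne]
    ring
  · rw [if_neg h, if_neg h]
    by_cases h2 : ((i, j) ∈ E ∧ 0 < Q i j) ∨ ((j, i) ∈ E ∧ 0 < Q i j)
    · rw [if_pos h2, if_pos ⟨h2, h⟩]; ring
    · rw [if_neg h2, if_neg (fun hc => h2 hc.1)]; ring

/-- The key decomposition of the quadratic form of the linearization. -/
lemma quadForm_linQ (n : ℕ) (E : Finset (Fin n × Fin n)) (Q : Matrix (Fin n) (Fin n) ℝ)
    (hdag : IsAcyclicEdges n E) (x : Fin n → ℝ) :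
    quadForm n (linQ n E Q) x = quadForm n Q x
      + ∑ i, ∑ j, ((if (i, j) ∈ E ∧ 0 < Q i j then Q i j * (x i * x i - x i * x j) else 0)
                 + (if (i, j) ∈ E ∧ 0 < Q j i then Q j i * (x i * x i - x j * x i) else 0)) := by
  have hsplit : quadForm n (linQ n E Q) x = quadForm n Q x
      + (∑ i, ∑ j, (if i = j then
            ((∑ j' ∈ univ.filter (fun j' => (i, j') ∈ E ∧ 0 < Q i j'), Q i j')
           + (∑ j' ∈ univ.filter (fun j' => (i, j') ∈ E ∧ 0 < Q j' i), Q j' i)) * (x i * x j)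
            else 0))
      + (∑ i, ∑ j, (if (((i, j) ∈ E ∧ 0 < Q i j) ∨ ((j, i) ∈ E ∧ 0 < Q i j)) ∧ i ≠ j
            then -(Q i j * (x i * x j)) else 0)) := by
    unfold quadForm
    rw [add_assoc, ← Finset.sum_add_distrib, ← Finset.sum_add_distrib]
    refine Finset.sum_congr rfl fun i _ => ?_
    rw [← Finset.sum_add_distrib, ← Finset.sum_add_distrib]
    refine Finset.sum_congr rfl fun j _ => ?_
    rw [linQ_decomp n E Q i j]
    split_ifs <;> ring
  -- simplify the diagonal double sum
  have hdiag : (∑ i, ∑ j, (if i = j then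
            ((∑ j' ∈ univ.filter (fun j' => (i, j') ∈ E ∧ 0 < Q i j'), Q i j')
           + (∑ j' ∈ univ.filter (fun j' => (i, j') ∈ E ∧ 0 < Q j' i), Q j' i)) * (x i * x j)
            else 0))
      = (∑ i, ∑ j, (if (i, j) ∈ E ∧ 0 < Q i j then Q i j * (x i * x i) else 0))
      + (∑ i, ∑ j, (if (i, j) ∈ E ∧ 0 < Q j i then Q j i * (x i * x i) else 0)) := by
    rw [← Finset.sum_add_distrib]
    refine Finset.sum_congr rfl fun i _ => ?_
    rw [Finset.sum_ite_eq]
    simp only [Finset.mem_univ, ite_true]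
    rw [add_mul, Finset.sum_mul, Finset.sum_mul, Finset.sum_filter, Finset.sum_filter]
  -- simplify the negative double sum
  have hneg : (∑ i, ∑ j, (if (((i, j) ∈ E ∧ 0 < Q i j) ∨ ((j, i) ∈ E ∧ 0 < Q i j)) ∧ i ≠ j
            then -(Q i j * (x i * x j)) else 0))
      = (∑ i, ∑ j, (if (i, j) ∈ E ∧ 0 < Q i j then -(Q i j * (x i * x j)) else 0))
      + (∑ i, ∑ j, (if (i, j) ∈ E ∧ 0 < Q j i then -(Q j i * (x j * x i)) else 0)) := by
    have hswap : (∑ i, ∑ j, (if (i, j) ∈ E ∧ 0 < Q j i then -(Q j i * (x j * x i)) else 0))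
        = (∑ i, ∑ j, (if (j, i) ∈ E ∧ 0 < Q i j then -(Q i j * (x i * x j)) else 0)) := by
      rw [Finset.sum_comm]
    rw [hswap, ← Finset.sum_add_distrib]
    refine Finset.sum_congr rfl fun i _ => ?_
    rw [← Finset.sum_add_distrib]
    refine Finset.sum_congr rfl fun j _ => ?_
    by_cases h1 : (i, j) ∈ E ∧ 0 < Q i j
    · have hne := edge_ne hdag h1.1
      have h2 : ¬ ((j, i) ∈ E ∧ 0 < Q i j) := fun h2 => edge_asymm hdag h1.1 h2.1
      rw [if_pos ⟨Or.inl h1, hne⟩, if_pos h1, if_neg h2]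
      ring
    · by_cases h2 : (j, i) ∈ E ∧ 0 < Q i j
      · have hne : i ≠ j := (edge_ne hdag h2.1).symm
        rw [if_pos ⟨Or.inr h2, hne⟩, if_neg h1, if_pos h2]
        ring
      · have h3 : ¬ ((((i, j) ∈ E ∧ 0 < Q i j) ∨ ((j, i) ∈ E ∧ 0 < Q i j)) ∧ i ≠ j) := by
          tauto
        rw [if_neg h3, if_neg h1, if_neg h2]
        ring
  -- combine everything
  have hcomb : ((∑ i, ∑ j, (if (i, j) ∈ E ∧ 0 < Q i j then Q i j * (x i * x i) else 0))
      + (∑ i, ∑ j, (if (i, j) ∈ E ∧ 0 < Q j i then Q j i * (x i * x i) else 0)))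
      + ((∑ i, ∑ j, (if (i, j) ∈ E ∧ 0 < Q i j then -(Q i j * (x i * x j)) else 0))
      + (∑ i, ∑ j, (if (i, j) ∈ E ∧ 0 < Q j i then -(Q j i * (x j * x i)) else 0)))
      = ∑ i, ∑ j, ((if (i, j) ∈ E ∧ 0 < Q i j then Q i j * (x i * x i - x i * x j) else 0)
                 + (if (i, j) ∈ E ∧ 0 < Q j i then Q j i * (x i * x i - x j * x i) else 0)) := by
    rw [show ∀ a b c d : ℝ, (a + b) + (c + d) = (a + c) + (b + d) from fun a b c d => by ring]
    rw [← Finset.sum_add_distrib, ← Finset.sum_add_distrib, ← Finset.sum_add_distrib]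
    refine Finset.sum_congr rfl fun i _ => ?_
    rw [← Finset.sum_add_distrib, ← Finset.sum_add_distrib, ← Finset.sum_add_distrib]
    refine Finset.sum_congr rfl fun j _ => ?_
    split_ifs <;> ring
  rw [hsplit, hdiag, hneg, add_assoc, hcomb]


lemma quadForm_le_linQ (n : ℕ) (E : Finset (Fin n × Fin n)) (Q : Matrix (Fin n) (Fin n) ℝ)
    (hdag : IsAcyclicEdges n E) {x : Fin n → ℝ} (hx : x ∈ Bset n) :
    quadForm n Q x ≤ quadForm n (linQ n E Q) x := by
  rw [quadForm_linQ n E Q hdag x]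
  have h : 0 ≤ ∑ i, ∑ j, ((if (i, j) ∈ E ∧ 0 < Q i j then Q i j * (x i * x i - x i * x j) else 0)
                 + (if (i, j) ∈ E ∧ 0 < Q j i then Q j i * (x i * x i - x j * x i) else 0)) := by
    refine Finset.sum_nonneg fun i _ => Finset.sum_nonneg fun j _ => add_nonneg ?_ ?_
    · split_ifs with h
      · refine mul_nonneg h.2.le ?_
        rcases hx i with hi | hi <;> rcases hx j with hj | hj <;> rw [hi, hj] <;> norm_num
      · exact le_refl 0
    · split_ifs with h
      · refine mul_nonneg h.2.le ?_
        rcases hx i with hi | hi <;> rcases hx j with hj | hj <;> rw [hi, hj] <;> norm_num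
      · exact le_refl 0
  linarith

lemma quadForm_linQ_eq (n : ℕ) (E : Finset (Fin n × Fin n)) (Q : Matrix (Fin n) (Fin n) ℝ)
    (hdag : IsAcyclicEdges n E) {x : Fin n → ℝ} (hx : x ∈ BsetG n E) :
    quadForm n (linQ n E Q) x = quadForm n Q x := by
  rw [quadForm_linQ n E Q hdag x]
  have h : ∑ i, ∑ j, ((if (i, j) ∈ E ∧ 0 < Q i j then Q i j * (x i * x i - x i * x j) else 0)
                 + (if (i, j) ∈ E ∧ 0 < Q j i then Q j i * (x i * x i - x j * x i) else 0)) = 0 := by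
    refine Finset.sum_eq_zero fun i _ => Finset.sum_eq_zero fun j _ => ?_
    have h1 : (if (i, j) ∈ E ∧ 0 < Q i j then Q i j * (x i * x i - x i * x j) else 0) = 0 := by
      split_ifs with h
      · rcases hx.1 i with hi | hi
        · rw [hi]; ring
        · rw [hi, hx.2 (i, j) h.1 hi]; ring
      · rfl
    have h2 : (if (i, j) ∈ E ∧ 0 < Q j i then Q j i * (x i * x i - x j * x i) else 0) = 0 := by
      split_ifs with h
      · rcases hx.1 i with hi | hi
        · rw [hi]; ring
        · rw [hi, hx.2 (i, j) h.1 hi]; ring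
      · rfl
    rw [h1, h2, add_zero]
  rw [h, add_zero]

lemma bset_finite (n : ℕ) : (Bset n).Finite := by
  have hsub : Bset n ⊆ Set.pi Set.univ (fun _ : Fin n => ({0, 1} : Set ℝ)) := by
    intro x hx i _
    rcases hx i with h | h <;> simp [h]
  exact (Set.Finite.pi fun i => (Set.finite_singleton (1 : ℝ)).insert 0).subset hsub

theorem stmt3 (n : ℕ) (Q : Matrix (Fin n) (Fin n) ℝ)
    (hupper : ∀ i j : Fin n, j < i → Q i j = 0)
    (E : Finset (Fin n × Fin n)) (hdag : IsAcyclicEdges n E)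
    (hvalid : sInf (quadForm n Q '' Bset n) = sInf (quadForm n Q '' BsetG n E)) :
    sInf (quadForm n Q '' Bset n) = sInf (quadForm n (linQ n E Q) '' Bset n) := by
  have hBf := bset_finite n
  have hbdd : BddBelow (quadForm n Q '' Bset n) := (hBf.image _).bddBelow
  have hbdd' : BddBelow (quadForm n (linQ n E Q) '' Bset n) := (hBf.image _).bddBelow
  have hz : (fun _ : Fin n => (0 : ℝ)) ∈ Bset n := fun i => Or.inl rfl
  have hzG : (fun _ : Fin n => (0 : ℝ)) ∈ BsetG n E :=
    ⟨hz, fun e _ h => absurd h (by norm_num)⟩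
  have hne' : (quadForm n (linQ n E Q) '' Bset n).Nonempty := ⟨_, ⟨_, hz, rfl⟩⟩
  have hneG : (quadForm n Q '' BsetG n E).Nonempty := ⟨_, ⟨_, hzG, rfl⟩⟩
  apply le_antisymm
  · refine le_csInf hne' ?_
    rintro b ⟨x, hx, rfl⟩
    calc sInf (quadForm n Q '' Bset n) ≤ quadForm n Q x := csInf_le hbdd ⟨x, hx, rfl⟩
      _ ≤ quadForm n (linQ n E Q) x := quadForm_le_linQ n E Q hdag hx
  · rw [hvalid]
    refine le_csInf hneG ?_
    rintro b ⟨x, hx, rfl⟩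
    calc sInf (quadForm n (linQ n E Q) '' Bset n) ≤ quadForm n (linQ n E Q) x :=
          csInf_le hbdd' ⟨x, hx.1, rfl⟩
      _ = quadForm n Q x := quadForm_linQ_eq n E Q hdag hx
end

section
/- Let Q ∈ ℝ^{n×n} be an upper-triangular matrix, G = (V, E) an order of n binary variables valid with respect to minimization of φ(x) = x^⊤ Q x, and Q^G the linearization of Q with respect to G (defined via the sets U_i^+ := { j : (i,j) ∈ E, Q_{i,j} > 0 } and U_i^- := { j : (i,j) ∈ E, Q_{j,i} > 0 } by zeroing the corresponding off-diagonal entries and adding them to the diagonal entry Q_{i,i}). If x* ∈ {0,1}^n attains the minimum of x^⊤ Q^G x over {0,1}^n, then x* attains the minimum of x^⊤ Q x over {0,1}^n. -/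
open Finset

noncomputable def fAux (n : ℕ) (E : Finset (Fin n × Fin n))
    (Q : Matrix (Fin n) (Fin n) ℝ) : Fin n → Fin n → ℝ :=
  fun i j => if (i, j) ∈ E ∧ 0 < Q i j then Q i j else 0

noncomputable def gAux (n : ℕ) (E : Finset (Fin n × Fin n))
    (Q : Matrix (Fin n) (Fin n) ℝ) : Fin n → Fin n → ℝ :=
  fun i j => if (i, j) ∈ E ∧ 0 < Q j i then Q j i else 0

lemma keyId (n : ℕ) (E : Finset (Fin n × Fin n)) (Q : Matrix (Fin n) (Fin n) ℝ)
    (hdag : IsAcyclicEdges n E) (x : Fin n → ℝ) :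
    quadForm n (linQ n E Q) x =
      quadForm n Q x +
        ∑ i, ∑ j, (fAux n E Q i j + gAux n E Q i j) * (x i * x i - x i * x j) := by
  have hself : ∀ i : Fin n, (i, i) ∉ E := fun i h => hdag i (Relation.TransGen.single h)
  have h2 : ∀ i j : Fin n, (i, j) ∈ E → (j, i) ∈ E → False :=
    fun i j a b => hdag i (Relation.TransGen.tail (Relation.TransGen.single a) b)
  have hA : ∀ i j, linQ n E Q i j =
      if i = j then Q i i + (∑ j', fAux n E Q i j') + (∑ j', gAux n E Q i j')
      else Q i j - fAux n E Q i j - gAux n E Q j i := by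
    intro i j
    by_cases h : i = j
    · subst h
      simp only [linQ, if_pos rfl]
      rw [Finset.sum_filter, Finset.sum_filter]
      rfl
    · simp only [linQ, if_neg h]
      by_cases h1 : (i, j) ∈ E ∧ 0 < Q i j
      · rw [if_pos (Or.inl h1)]
        have hf : fAux n E Q i j = Q i j := by unfold fAux; rw [if_pos h1]
        have hg : gAux n E Q j i = 0 := by
          unfold gAux; rw [if_neg (fun hc => h2 i j h1.1 hc.1)]
        rw [hf, hg]; ring
      · by_cases h3 : (j, i) ∈ E ∧ 0 < Q i j
        · rw [if_pos (Or.inr h3)]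
          have hf : fAux n E Q i j = 0 := by unfold fAux; rw [if_neg h1]
          have hg : gAux n E Q j i = Q i j := by unfold gAux; rw [if_pos h3]
          rw [hf, hg]; ring
        · rw [if_neg (by tauto)]
          have hf : fAux n E Q i j = 0 := by unfold fAux; rw [if_neg h1]
          have hg : gAux n E Q j i = 0 := by unfold gAux; rw [if_neg h3]
          rw [hf, hg]; ring
  have step : ∀ i : Fin n, ∑ j, linQ n E Q i j * x i * x j
      = (∑ j, (Q i j - fAux n E Q i j - gAux n E Q j i) * x i * x j)
        + ((∑ j', fAux n E Q i j') + (∑ j', gAux n E Q i j')) * (x i * x i) := by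
    intro i
    have hterm : ∀ j : Fin n, linQ n E Q i j * x i * x j
        = (Q i j - fAux n E Q i j - gAux n E Q j i) * x i * x j
          + (if i = j then ((∑ j', fAux n E Q i j') + (∑ j', gAux n E Q i j')) * (x i * x j)
             else 0) := by
      intro j
      rw [hA i j]
      split_ifs with h
      · subst h
        have hf : fAux n E Q i i = 0 := by simp [fAux, hself i]
        have hg : gAux n E Q i i = 0 := by simp [gAux, hself i]
        rw [hf, hg]; ring
      · ring
    rw [Finset.sum_congr rfl (fun j _ => hterm j), Finset.sum_add_distrib,
        Finset.sum_ite_eq univ i, if_pos (Finset.mem_univ i)]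
  unfold quadForm
  rw [Finset.sum_congr rfl (fun i _ => step i), Finset.sum_add_distrib]
  have comm : ∑ i, ∑ j, gAux n E Q j i * (x i * x j)
      = ∑ i, ∑ j, gAux n E Q i j * (x i * x j) := by
    rw [Finset.sum_comm]
    exact Finset.sum_congr rfl fun i _ => Finset.sum_congr rfl fun j _ => by ring
  have expand1 : ∑ i, ∑ j, (Q i j - fAux n E Q i j - gAux n E Q j i) * x i * x j
      = (∑ i, ∑ j, Q i j * x i * x j) - (∑ i, ∑ j, fAux n E Q i j * (x i * x j))
        - (∑ i, ∑ j, gAux n E Q j i * (x i * x j)) := by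
    rw [← Finset.sum_sub_distrib, ← Finset.sum_sub_distrib]
    exact Finset.sum_congr rfl fun i _ => by
      rw [← Finset.sum_sub_distrib, ← Finset.sum_sub_distrib]
      exact Finset.sum_congr rfl fun j _ => by ring
  have expand2 : ∑ i, ((∑ j', fAux n E Q i j') + (∑ j', gAux n E Q i j')) * (x i * x i)
      = (∑ i, ∑ j, fAux n E Q i j * (x i * x i))
        + (∑ i, ∑ j, gAux n E Q i j * (x i * x i)) := by
    rw [← Finset.sum_add_distrib]
    exact Finset.sum_congr rfl fun i _ => by
      rw [add_mul, Finset.sum_mul, Finset.sum_mul]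
  have expand3 : ∑ i, ∑ j, (fAux n E Q i j + gAux n E Q i j) * (x i * x i - x i * x j)
      = ((∑ i, ∑ j, fAux n E Q i j * (x i * x i))
          + (∑ i, ∑ j, gAux n E Q i j * (x i * x i)))
        - ((∑ i, ∑ j, fAux n E Q i j * (x i * x j))
          + (∑ i, ∑ j, gAux n E Q i j * (x i * x j))) := by
    rw [← Finset.sum_add_distrib, ← Finset.sum_add_distrib, ← Finset.sum_sub_distrib]
    exact Finset.sum_congr rfl fun i _ => by
      rw [← Finset.sum_add_distrib, ← Finset.sum_add_distrib, ← Finset.sum_sub_distrib]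
      exact Finset.sum_congr rfl fun j _ => by ring
  rw [expand1, expand2, expand3, comm]
  ring

lemma le_lin (n : ℕ) (E : Finset (Fin n × Fin n)) (Q : Matrix (Fin n) (Fin n) ℝ)
    (hdag : IsAcyclicEdges n E) (x : Fin n → ℝ) (hx : x ∈ Bset n) :
    quadForm n Q x ≤ quadForm n (linQ n E Q) x := by
  rw [keyId n E Q hdag x]
  have : 0 ≤ ∑ i, ∑ j, (fAux n E Q i j + gAux n E Q i j) * (x i * x i - x i * x j) := by
    apply Finset.sum_nonneg; intro i _
    apply Finset.sum_nonneg; intro j _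
    apply mul_nonneg
    · apply add_nonneg
      · unfold fAux; split_ifs with h; exacts [h.2.le, le_refl 0]
      · unfold gAux; split_ifs with h; exacts [h.2.le, le_refl 0]
    · rcases hx i with h | h <;> rcases hx j with h' | h' <;> rw [h, h'] <;> norm_num
  linarith

lemma eq_lin (n : ℕ) (E : Finset (Fin n × Fin n)) (Q : Matrix (Fin n) (Fin n) ℝ)
    (hdag : IsAcyclicEdges n E) (x : Fin n → ℝ) (hx : x ∈ BsetG n E) :
    quadForm n (linQ n E Q) x = quadForm n Q x := by
  rw [keyId n E Q hdag x]
  have : ∑ i, ∑ j, (fAux n E Q i j + gAux n E Q i j) * (x i * x i - x i * x j) = 0 := by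
    apply Finset.sum_eq_zero; intro i _
    apply Finset.sum_eq_zero; intro j _
    by_cases hE : (i, j) ∈ E
    · rcases hx.1 i with h | h
      · rw [h]; ring
      · have := hx.2 (i, j) hE h
        rw [h, this]; ring
    · have hf : fAux n E Q i j = 0 := by simp [fAux, hE]
      have hg : gAux n E Q i j = 0 := by simp [gAux, hE]
      rw [hf, hg]; ring
  rw [this]; ring

theorem stmt4 (n : ℕ) (Q : Matrix (Fin n) (Fin n) ℝ)
    (hupper : ∀ i j : Fin n, j < i → Q i j = 0)
    (E : Finset (Fin n × Fin n)) (hdag : IsAcyclicEdges n E)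
    (hvalid : sInf (quadForm n Q '' Bset n) = sInf (quadForm n Q '' BsetG n E))
    (xstar : Fin n → ℝ) (hxstar : xstar ∈ Bset n)
    (hmin : ∀ x ∈ Bset n, quadForm n (linQ n E Q) xstar ≤ quadForm n (linQ n E Q) x) :
    ∀ x ∈ Bset n, quadForm n Q xstar ≤ quadForm n Q x := by
  have hBfin : (Bset n).Finite := by
    have hpi : (Set.pi Set.univ fun _ : Fin n => ({0, 1} : Set ℝ)).Finite :=
      Set.Finite.pi fun _ => (Set.finite_singleton (1 : ℝ)).insert 0
    apply hpi.subset
    intro x hx i _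
    rcases hx i with h | h <;> simp [h]
  have h0G : (0 : Fin n → ℝ) ∈ BsetG n E := by
    refine ⟨fun i => Or.inl rfl, fun e _ h => ?_⟩
    simp at h
  have hlb : ∀ y ∈ BsetG n E, quadForm n Q xstar ≤ quadForm n Q y := by
    intro y hy
    calc quadForm n Q xstar ≤ quadForm n (linQ n E Q) xstar :=
          le_lin n E Q hdag xstar hxstar
      _ ≤ quadForm n (linQ n E Q) y := hmin y hy.1
      _ = quadForm n Q y := eq_lin n E Q hdag y hy
  intro x hx
  have h1 : quadForm n Q xstar ≤ sInf (quadForm n Q '' BsetG n E) := by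
    apply le_csInf ⟨_, Set.mem_image_of_mem _ h0G⟩
    rintro _ ⟨y, hy, rfl⟩
    exact hlb y hy
  have h2 : sInf (quadForm n Q '' Bset n) ≤ quadForm n Q x :=
    csInf_le (Set.Finite.bddBelow (hBfin.image _)) ⟨x, hx, rfl⟩
  rw [← hvalid] at h1
  linarith
end

section
/- Let Q ∈ ℝ^{n×n}, φ(x) = x^⊤ Q x, a_{i,j} := Q_{i,j} + Q_{j,i} for i ≠ j, a_{i,i} := Q_{i,i}, and S_{i,j} := Σ_{k ≠ i,j} max{0, a_{j,k} − a_{i,k}} + a_{j,j} − a_{i,i}. Let G = (V, E) be an order of n binary variables such that S_{i,j} ≤ 0 for every edge (i,j) ∈ E. Then for every x ∈ {0,1}^n there exists x̃ ∈ B_n^G such that φ(x̃) ≤ φ(x). -/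
open Finset

/-- Coefficient `a_{i,j}` of `x_i x_j` (or of `x_i` if `i = j`) in `x ⊤ Q x`. -/
def aCoef (n : ℕ) (Q : Matrix (Fin n) (Fin n) ℝ) (i j : Fin n) : ℝ :=
  if i = j then Q i i else Q i j + Q j i

/-- `S_{i,j} = ∑_{k ≠ i,j} max {0, a_{j,k} − a_{i,k}} + a_{j,j} − a_{i,i}`. -/
noncomputable def Sval (n : ℕ) (Q : Matrix (Fin n) (Fin n) ℝ) (i j : Fin n) : ℝ :=
  (∑ k ∈ univ.filter (fun k => k ≠ i ∧ k ≠ j), max 0 (aCoef n Q j k - aCoef n Q i k))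
    + aCoef n Q j j - aCoef n Q i i

open scoped Classical

lemma double_split {n : ℕ} (F : Fin n → Fin n → ℝ) (i : Fin n) :
    ∑ p, ∑ q, F p q = F i i + ∑ q ∈ univ.erase i, F i q + ∑ p ∈ univ.erase i, F p i
      + ∑ p ∈ univ.erase i, ∑ q ∈ univ.erase i, F p q := by
  rw [← Finset.add_sum_erase univ (fun p => ∑ q, F p q) (mem_univ i),
      ← Finset.add_sum_erase univ (fun q => F i q) (mem_univ i)]
  have : ∀ p ∈ univ.erase i, ∑ q, F p q = F p i + ∑ q ∈ univ.erase i, F p q := by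
    intro p _
    rw [← Finset.add_sum_erase univ (fun q => F p q) (mem_univ i)]
  rw [Finset.sum_congr rfl this, Finset.sum_add_distrib]
  ring

lemma quad_update (n : ℕ) (Q : Matrix (Fin n) (Fin n) ℝ) (x : Fin n → ℝ) (i : Fin n) (t : ℝ) :
    quadForm n Q (Function.update x i t) =
      quadForm n Q x + Q i i * (t * t - x i * x i)
        + (t - x i) * ∑ k ∈ univ.erase i, (Q i k + Q k i) * x k := by
  unfold quadForm
  rw [double_split (fun p q => Q p q * (Function.update x i t) p * (Function.update x i t) q) i,
      double_split (fun p q => Q p q * x p * x q) i]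
  have hup : ∀ k ∈ univ.erase i, Function.update x i t k = x k := fun k hk =>
    Function.update_of_ne (Finset.ne_of_mem_erase hk) _ _
  simp only [Function.update_self]
  have e1 : ∑ q ∈ univ.erase i, Q i q * t * Function.update x i t q
      = t * ∑ q ∈ univ.erase i, Q i q * x q := by
    rw [Finset.mul_sum]; exact Finset.sum_congr rfl (fun q hq => by rw [hup q hq]; ring)
  have e2 : ∑ p ∈ univ.erase i, Q p i * Function.update x i t p * t
      = t * ∑ p ∈ univ.erase i, Q p i * x p := by
    rw [Finset.mul_sum]; exact Finset.sum_congr rfl (fun q hq => by rw [hup q hq]; ring)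
  have e3 : ∑ p ∈ univ.erase i, ∑ q ∈ univ.erase i,
        Q p q * Function.update x i t p * Function.update x i t q
      = ∑ p ∈ univ.erase i, ∑ q ∈ univ.erase i, Q p q * x p * x q :=
    Finset.sum_congr rfl fun p hp => Finset.sum_congr rfl fun q hq => by
      rw [hup p hp, hup q hq]
  have e4 : ∑ q ∈ univ.erase i, Q i q * x i * x q = x i * ∑ q ∈ univ.erase i, Q i q * x q := by
    rw [Finset.mul_sum]; exact Finset.sum_congr rfl (fun q _ => by ring)
  have e5 : ∑ p ∈ univ.erase i, Q p i * x p * x i = x i * ∑ p ∈ univ.erase i, Q p i * x p := by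
    rw [Finset.mul_sum]; exact Finset.sum_congr rfl (fun q _ => by ring)
  have e6 : ∑ k ∈ univ.erase i, (Q i k + Q k i) * x k
      = (∑ q ∈ univ.erase i, Q i q * x q) + ∑ p ∈ univ.erase i, Q p i * x p := by
    rw [← Finset.sum_add_distrib]; exact Finset.sum_congr rfl (fun q _ => by ring)
  rw [e1, e2, e3, e4, e5, e6]
  ring

lemma flip_le (n : ℕ) (Q : Matrix (Fin n) (Fin n) ℝ) (x : Fin n → ℝ) (hx : x ∈ Bset n)
    (i j : Fin n) (hij : i ≠ j) (hxi : x i = 1) (hxj : x j = 0)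
    (hSij : Sval n Q i j ≤ 0) :
    quadForm n Q (Function.update (Function.update x i 0) j 1) ≤ quadForm n Q x := by
  set z := Function.update x i 0 with hz
  have hzj : z j = 0 := by rw [hz, Function.update_of_ne (Ne.symm hij), hxj]
  have hzi : z i = 0 := Function.update_self i 0 x
  have hzk : ∀ k, k ≠ i → z k = x k := fun k hk => Function.update_of_ne hk _ _
  rw [quad_update, quad_update, hzj, hxi]
  set s : Finset (Fin n) := univ.filter (fun k => k ≠ i ∧ k ≠ j) with hs
  have hsub1 : s ⊆ univ.erase j := by
    intro k hk; simp only [hs, mem_filter] at hk; exact Finset.mem_erase.2 ⟨hk.2.2, mem_univ k⟩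
  have hsub2 : s ⊆ univ.erase i := by
    intro k hk; simp only [hs, mem_filter] at hk; exact Finset.mem_erase.2 ⟨hk.2.1, mem_univ k⟩
  have ej : ∑ k ∈ univ.erase j, (Q j k + Q k j) * z k
      = ∑ k ∈ s, (Q j k + Q k j) * x k := by
    rw [← Finset.sum_subset hsub1 (fun k hk hks => by
      have hki : k = i := by
        simp only [hs, mem_filter, mem_univ, true_and, not_and, not_not] at hks
        by_contra hne
        exact (Finset.mem_erase.1 hk).1 (hks hne)
      rw [hki, hzi, mul_zero])]
    exact Finset.sum_congr rfl fun k hk => by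
      rw [hzk k (by simp only [hs, mem_filter] at hk; exact hk.2.1)]
  have ei : ∑ k ∈ univ.erase i, (Q i k + Q k i) * x k
      = ∑ k ∈ s, (Q i k + Q k i) * x k := by
    rw [← Finset.sum_subset hsub2 (fun k hk hks => by
      have hkj : k = j := by
        simp only [hs, mem_filter, mem_univ, true_and, not_and, not_not] at hks
        exact hks (Finset.mem_erase.1 hk).1
      rw [hkj, hxj, mul_zero])]
  rw [ej, ei]
  have key : ∑ k ∈ s, (Q j k + Q k j) * x k - ∑ k ∈ s, (Q i k + Q k i) * x k + Q j j - Q i i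
      ≤ Sval n Q i j := by
    rw [← Finset.sum_sub_distrib]
    unfold Sval aCoef
    rw [if_pos rfl, if_pos rfl]
    have hb : ∀ k ∈ s, (Q j k + Q k j) * x k - (Q i k + Q k i) * x k
        ≤ max 0 ((if j = k then Q j j else Q j k + Q k j) - if i = k then Q i i else Q i k + Q k i) := by
      intro k hk
      simp only [hs, mem_filter] at hk
      rw [if_neg (fun h => hk.2.2 h.symm), if_neg (fun h => hk.2.1 h.symm)]
      rcases hx k with h0 | h1
      · rw [h0]; simp
      · rw [h1]; simp only [mul_one]; exact le_max_right _ _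
    have := Finset.sum_le_sum hb
    linarith
  nlinarith [key, hSij]

noncomputable def wgt (n : ℕ) (E : Finset (Fin n × Fin n)) (i : Fin n) : ℕ :=
  (univ.filter (fun k => Relation.ReflTransGen (fun a b => (a, b) ∈ E) i k)).card

noncomputable def meas (n : ℕ) (E : Finset (Fin n × Fin n)) (x : Fin n → ℝ) : ℕ :=
  ∑ i ∈ univ.filter (fun i => x i = 1), wgt n E i

lemma wgt_lt (n : ℕ) (E : Finset (Fin n × Fin n)) (hdag : IsAcyclicEdges n E)
    (i j : Fin n) (hij : (i, j) ∈ E) : wgt n E j < wgt n E i := by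
  apply Finset.card_lt_card
  rw [Finset.ssubset_iff_of_subset]
  · refine ⟨i, ?_, ?_⟩
    · simp [Relation.ReflTransGen.refl]
    · simp only [mem_filter, mem_univ, true_and, not_not]
      intro h
      exact hdag i (Relation.TransGen.head' hij h)
  · intro k hk
    simp only [mem_filter, mem_univ, true_and] at hk ⊢
    exact Relation.ReflTransGen.head hij hk

lemma meas_lt (n : ℕ) (E : Finset (Fin n × Fin n)) (hdag : IsAcyclicEdges n E)
    (x : Fin n → ℝ) (i j : Fin n) (hij : (i, j) ∈ E) (hne : i ≠ j)
    (hxi : x i = 1) (hxj : x j = 0) :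
    meas n E (Function.update (Function.update x i 0) j 1) < meas n E x := by
  set x' := Function.update (Function.update x i 0) j 1 with hx'
  have hset : univ.filter (fun k => x' k = 1) = insert j ((univ.filter (fun k => x k = 1)).erase i) := by
    ext k
    simp only [mem_filter, mem_univ, true_and, Finset.mem_insert, Finset.mem_erase]
    rcases eq_or_ne k j with rfl | hkj
    · simp [hx', Function.update_self]
    · rcases eq_or_ne k i with rfl | hki
      · simp [hx', Function.update_of_ne hne.symm.symm, Function.update_of_ne, hne, hkj,
          Function.update_self]
      · simp [hx', Function.update_of_ne hkj, Function.update_of_ne hki, hkj, hki]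
  unfold meas
  rw [hset, Finset.sum_insert (by simp [hxj])]
  have h1 : wgt n E j < wgt n E i := wgt_lt n E hdag i j hij
  have h2 : wgt n E i + ∑ k ∈ (univ.filter (fun k => x k = 1)).erase i, wgt n E k
      = ∑ k ∈ univ.filter (fun k => x k = 1), wgt n E k :=
    Finset.add_sum_erase _ _ (by simp [hxi])
  omega

theorem stmt6 (n : ℕ) (Q : Matrix (Fin n) (Fin n) ℝ)
    (E : Finset (Fin n × Fin n)) (hdag : IsAcyclicEdges n E)
    (hS : ∀ e ∈ E, Sval n Q e.1 e.2 ≤ 0) :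
    ∀ x ∈ Bset n, ∃ y ∈ BsetG n E, quadForm n Q y ≤ quadForm n Q x := by
  suffices h : ∀ N : ℕ, ∀ x, meas n E x < N → x ∈ Bset n →
      ∃ y ∈ BsetG n E, quadForm n Q y ≤ quadForm n Q x by
    intro x hx
    exact h (meas n E x + 1) x (Nat.lt_succ_self _) hx
  intro N
  induction N with
  | zero => intro x hm _; exact absurd hm (Nat.not_lt_zero _)
  | succ N ih =>
    intro x hm hx
    by_cases hv : ∀ e ∈ E, x e.1 = 1 → x e.2 = 1
    · exact ⟨x, ⟨hx, hv⟩, le_refl _⟩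
    · push_neg at hv
      obtain ⟨e, heE, he1, he2⟩ := hv
      have hxj : x e.2 = 0 := (hx e.2).resolve_right he2
      have hne : e.1 ≠ e.2 := fun h => by rw [h, hxj] at he1; norm_num at he1
      have heE' : (e.1, e.2) ∈ E := by rwa [Prod.mk.eta]
      set x' := Function.update (Function.update x e.1 0) e.2 1 with hx'def
      have hx' : x' ∈ Bset n := by
        intro k
        rcases eq_or_ne k e.2 with rfl | h2
        · right; rw [hx'def]; exact Function.update_self _ _ _
        · rw [hx'def, Function.update_of_ne h2]
          rcases eq_or_ne k e.1 with rfl | h1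
          · left; exact Function.update_self _ _ _
          · rw [Function.update_of_ne h1]; exact hx k
      have hml : meas n E x' < meas n E x := meas_lt n E hdag x e.1 e.2 heE' hne he1 hxj
      obtain ⟨y, hy, hyle⟩ := ih x' (by omega) hx'
      exact ⟨y, hy, le_trans hyle (flip_le n Q x hx e.1 e.2 hne he1 hxj (hS e heE))⟩
end

section
/- Let d ≤ n be positive integers and let φ(x) = x^⊤ Q x for Q ∈ ℝ^{n×n} be symmetric with respect to the variables x_1,…,x_d (i.e., with a_{i,j} := Q_{i,j} + Q_{j,i} for i ≠ j and a_{i,i} := Q_{i,i}, one has a_{i,i} = a_{j,j} and a_{i,k} = a_{j,k} for all 1 ≤ i, j ≤ d and k ∉ {i, j}). Then the order G = (V, E) with edge set E = { (i, j) : 1 ≤ i < j ≤ d } is valid with respect to minimization of φ: min { φ(x) : x ∈ {0,1}^n } = min { φ(x) : x ∈ B_n^G }. -/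
open Finset

/-! Swapping two symmetric variables `x_p, x_q` only permutes the coefficients `a_{i,j}`, so `φ`
is invariant under it. If a binary vector violates an edge `(p, q)` with `p < q`, that is
`x_p = 1` and `x_q = 0`, swapping these two coordinates keeps `φ` and moves a one to a larger
index; after finitely many such swaps one lands in `B_n^G`. So `φ` takes the same values on
`B_n` and on `B_n^G`. -/

lemma aCoef_comm (n : ℕ) (Q : Matrix (Fin n) (Fin n) ℝ) (i j : Fin n) :
    aCoef n Q i j = aCoef n Q j i := by
  unfold aCoef
  rcases eq_or_ne i j with rfl | h
  · rfl
  · rw [if_neg h, if_neg h.symm, add_comm]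

lemma two_mul_quadForm (n : ℕ) (Q : Matrix (Fin n) (Fin n) ℝ) (x : Fin n → ℝ) :
    2 * quadForm n Q x = ∑ i, ∑ j, (Q i j + Q j i) * x i * x j := by
  simp only [quadForm, add_mul, sum_add_distrib]
  rw [sum_comm (f := fun i j => Q j i * x i * x j)]
  simp only [two_mul, mul_right_comm _ (x _) (x _)]

lemma quadForm_comp_perm (n : ℕ) (Q : Matrix (Fin n) (Fin n) ℝ) (σ : Equiv.Perm (Fin n))
    (hσ : ∀ i j, aCoef n Q (σ i) (σ j) = aCoef n Q i j) (x : Fin n → ℝ) :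
    quadForm n Q (x ∘ σ) = quadForm n Q x := by
  have hsym : ∀ i j, Q (σ i) (σ j) + Q (σ j) (σ i) = Q i j + Q j i := by
    intro i j
    have h := hσ i j
    unfold aCoef at h
    by_cases hij : i = j
    · subst hij; simp only [if_true] at h; rw [h]
    · rwa [if_neg (σ.injective.ne hij), if_neg hij] at h
  suffices 2 * quadForm n Q (x ∘ σ) = 2 * quadForm n Q x by linarith
  calc 2 * quadForm n Q (x ∘ σ)
      = ∑ i, ∑ j, (Q (σ i) (σ j) + Q (σ j) (σ i)) * x (σ i) * x (σ j) := by
        simp only [two_mul_quadForm, Function.comp_apply, hsym]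
    _ = ∑ i, ∑ j, (Q i j + Q j i) * x i * x j := by
        rw [Equiv.sum_comp σ fun i => ∑ j, (Q i (σ j) + Q (σ j) i) * x i * x (σ j)]
        exact sum_congr rfl fun i _ => Equiv.sum_comp σ fun j => (Q i j + Q j i) * x i * x j
    _ = 2 * quadForm n Q x := (two_mul_quadForm n Q x).symm

lemma aCoef_swap_apply_left (n : ℕ) (Q : Matrix (Fin n) (Fin n) ℝ) {p q : Fin n}
    (hoff : ∀ k, k ≠ p → k ≠ q → aCoef n Q p k = aCoef n Q q k)
    (i : Fin n) {k : Fin n} (hkp : k ≠ p) (hkq : k ≠ q) :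
    aCoef n Q (Equiv.swap p q i) k = aCoef n Q i k := by
  rw [Equiv.swap_apply_def]
  split_ifs with hip hiq
  · subst hip; exact (hoff k hkp hkq).symm
  · subst hiq; exact hoff k hkp hkq
  · rfl

lemma aCoef_swap_apply (n : ℕ) (Q : Matrix (Fin n) (Fin n) ℝ) {p q : Fin n}
    (hdiag : aCoef n Q p p = aCoef n Q q q)
    (hoff : ∀ k, k ≠ p → k ≠ q → aCoef n Q p k = aCoef n Q q k) (i j : Fin n) :
    aCoef n Q (Equiv.swap p q i) (Equiv.swap p q j) = aCoef n Q i j := by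
  by_cases hj : j ≠ p ∧ j ≠ q
  · rw [Equiv.swap_apply_of_ne_of_ne hj.1 hj.2, aCoef_swap_apply_left n Q hoff i hj.1 hj.2]
  by_cases hi : i ≠ p ∧ i ≠ q
  · rw [Equiv.swap_apply_of_ne_of_ne hi.1 hi.2, aCoef_comm, aCoef_comm n Q i,
      aCoef_swap_apply_left n Q hoff j hi.1 hi.2]
  have hi' : i = p ∨ i = q := by tauto
  have hj' : j = p ∨ j = q := by tauto
  rcases hi' with rfl | rfl <;> rcases hj' with rfl | rfl <;>
    simp only [Equiv.swap_apply_left, Equiv.swap_apply_right, hdiag, aCoef_comm]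

/-- Strictly increases when a `1` is swapped with a `0` of larger index, which makes the repair
of violated edges terminate. -/
noncomputable def onesIndexSum (n : ℕ) (x : Fin n → ℝ) : ℕ :=
  ∑ i, if x i = 1 then (i : ℕ) else 0

lemma onesIndexSum_le (n : ℕ) (x : Fin n → ℝ) :
    onesIndexSum n x ≤ ∑ i : Fin n, (i : ℕ) :=
  sum_le_sum fun i _ => by split_ifs <;> simp

lemma onesIndexSum_comp_swap {n : ℕ} {x : Fin n → ℝ} {p q : Fin n} (hpq : p ≠ q)
    (hp : x p = 1) (hq : x q = 0) :
    onesIndexSum n (x ∘ Equiv.swap p q) + p = onesIndexSum n x + q := by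
  have h : ∀ j,
      (if x (Equiv.swap p q j) = 1 then (j : ℕ) else 0) + (if j = p then (p : ℕ) else 0) =
        (if x j = 1 then (j : ℕ) else 0) + (if j = q then (q : ℕ) else 0) := by
    intro j
    rcases eq_or_ne j p with rfl | hjp
    · simp [hp, hq, hpq]
    rcases eq_or_ne j q with rfl | hjq
    · simp [hp, hq, hjp]
    · simp [Equiv.swap_apply_of_ne_of_ne hjp hjq, hjp, hjq]
  have hsum := sum_congr rfl fun j (_ : j ∈ univ) => h j
  rw [sum_add_distrib, sum_add_distrib, sum_ite_eq', sum_ite_eq'] at hsum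
  simpa [onesIndexSum] using hsum

lemma exists_mem_BsetG_eq {n : ℕ} (φ : (Fin n → ℝ) → ℝ) (E : Finset (Fin n × Fin n))
    (hE : ∀ e ∈ E, e.1 < e.2 ∧ ∀ x, φ (x ∘ Equiv.swap e.1 e.2) = φ x)
    {x : Fin n → ℝ} (hx : x ∈ Bset n) : ∃ y ∈ BsetG n E, φ y = φ x := by
  induction hm : ∑ i : Fin n, (i : ℕ) - onesIndexSum n x using Nat.strong_induction_on
    generalizing x with
  | _ m ih =>
  by_cases hxE : ∀ e ∈ E, x e.1 = 1 → x e.2 = 1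
  · exact ⟨x, ⟨hx, hxE⟩, rfl⟩
  push Not at hxE
  obtain ⟨⟨p, q⟩, he, hp, hq⟩ := hxE
  obtain ⟨hpq, hφ⟩ : p < q ∧ ∀ x, φ (x ∘ Equiv.swap p q) = φ x := hE _ he
  have hsum := onesIndexSum_comp_swap hpq.ne hp ((hx q).resolve_right hq)
  have hle := onesIndexSum_le n (x ∘ Equiv.swap p q)
  have hlt : (p : ℕ) < q := hpq
  obtain ⟨y, hy, hφy⟩ := ih _ (by omega) (x := x ∘ Equiv.swap p q) (fun i => hx _) rfl
  exact ⟨y, hy, hφy.trans (hφ x)⟩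

lemma image_Bset_eq_image_BsetG {n : ℕ} (φ : (Fin n → ℝ) → ℝ)
    (E : Finset (Fin n × Fin n))
    (hE : ∀ e ∈ E, e.1 < e.2 ∧ ∀ x, φ (x ∘ Equiv.swap e.1 e.2) = φ x) :
    φ '' Bset n = φ '' BsetG n E := by
  refine subset_antisymm ?_ (Set.image_mono fun _ hx => hx.1)
  rintro _ ⟨x, hx, rfl⟩
  exact exists_mem_BsetG_eq φ E hE hx

theorem stmt9_general (n d : ℕ)
    (Q : Matrix (Fin n) (Fin n) ℝ)
    (hsymDiag : ∀ i j : Fin n, (i : ℕ) < d → (j : ℕ) < d →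
      aCoef n Q i i = aCoef n Q j j)
    (hsymOff : ∀ i j k : Fin n, (i : ℕ) < d → (j : ℕ) < d → k ≠ i → k ≠ j →
      aCoef n Q i k = aCoef n Q j k) :
    sInf (quadForm n Q '' Bset n) =
      sInf (quadForm n Q ''
        BsetG n (univ.filter (fun p : Fin n × Fin n =>
          (p.1 : ℕ) < d ∧ (p.2 : ℕ) < d ∧ p.1 < p.2))) := by
  rw [image_Bset_eq_image_BsetG]
  rintro ⟨p, q⟩ he
  obtain ⟨hp, hq, hpq⟩ := (mem_filter.mp he).2
  exact ⟨hpq, quadForm_comp_perm n Q _ <| aCoef_swap_apply n Q (hsymDiag p q hp hq)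
    fun k hkp hkq => hsymOff p q k hp hq hkp hkq⟩

theorem stmt9 (n d : ℕ) (hd : 0 < d) (hdn : d ≤ n)
    (Q : Matrix (Fin n) (Fin n) ℝ)
    (hsymDiag : ∀ i j : Fin n, (i : ℕ) < d → (j : ℕ) < d →
      aCoef n Q i i = aCoef n Q j j)
    (hsymOff : ∀ i j k : Fin n, (i : ℕ) < d → (j : ℕ) < d → k ≠ i → k ≠ j →
      aCoef n Q i k = aCoef n Q j k) :
    sInf (quadForm n Q '' Bset n) =
      sInf (quadForm n Q ''
        BsetG n (univ.filter (fun p : Fin n × Fin n =>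
          (p.1 : ℕ) < d ∧ (p.2 : ℕ) < d ∧ p.1 < p.2))) :=
  stmt9_general n d Q hsymDiag hsymOff
end

section
/- Let Q ∈ ℝ^{n×n}, with a_{i,j} := Q_{i,j} + Q_{j,i} for i ≠ j, a_{i,i} := Q_{i,i}, and S_{i,j} := Σ_{k ≠ i,j} max{0, a_{j,k} − a_{i,k}} + a_{j,j} − a_{i,i}. If distinct indices i, j satisfy both S_{i,j} ≤ 0 and S_{j,i} ≤ 0, then a_{i,i} = a_{j,j} and a_{i,k} = a_{j,k} for every k ∉ {i, j}; that is, the quadratic function φ(x) = x^⊤ Q x is symmetric with respect to x_i and x_j. -/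
open Finset

theorem stmt11 (n : ℕ) (Q : Matrix (Fin n) (Fin n) ℝ)
    (i j : Fin n) (hij : i ≠ j)
    (hSij : Sval n Q i j ≤ 0) (hSji : Sval n Q j i ≤ 0) :
    aCoef n Q i i = aCoef n Q j j ∧
      ∀ k : Fin n, k ≠ i → k ≠ j → aCoef n Q i k = aCoef n Q j k := by
  set s : Finset (Fin n) := univ.filter (fun k => k ≠ i ∧ k ≠ j) with hs
  have hset : univ.filter (fun k : Fin n => k ≠ j ∧ k ≠ i) = s := by
    rw [hs]; ext k; simp [and_comm]
  set T1 : ℝ := ∑ k ∈ s, max 0 (aCoef n Q j k - aCoef n Q i k) with hT1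
  set T2 : ℝ := ∑ k ∈ s, max 0 (aCoef n Q i k - aCoef n Q j k) with hT2
  have hS1 : Sval n Q i j = T1 + aCoef n Q j j - aCoef n Q i i := by
    rw [Sval, hT1, hs]
  have hS2 : Sval n Q j i = T2 + aCoef n Q i i - aCoef n Q j j := by
    rw [Sval, hset, hT2]
  have hT1nn : 0 ≤ T1 := Finset.sum_nonneg fun k _ => le_max_left _ _
  have hT2nn : 0 ≤ T2 := Finset.sum_nonneg fun k _ => le_max_left _ _
  have hsum : T1 + T2 ≤ 0 := by
    have := add_le_add hSij hSji
    rw [hS1, hS2] at this; linarith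
  have hT1z : T1 = 0 := by linarith
  have hT2z : T2 = 0 := by linarith
  have haii : aCoef n Q i i = aCoef n Q j j := by
    rw [hS1] at hSij; rw [hS2] at hSji; linarith
  refine ⟨haii, fun k hki hkj => ?_⟩
  have hks : k ∈ s := by simp [hs, hki, hkj]
  have h1 : max 0 (aCoef n Q j k - aCoef n Q i k) = 0 := by
    exact (Finset.sum_eq_zero_iff_of_nonneg
      (fun k _ => le_max_left 0 (aCoef n Q j k - aCoef n Q i k))).mp hT1z k hks
  have h2 : max 0 (aCoef n Q i k - aCoef n Q j k) = 0 := by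
    exact (Finset.sum_eq_zero_iff_of_nonneg
      (fun k _ => le_max_left 0 (aCoef n Q i k - aCoef n Q j k))).mp hT2z k hks
  have := max_eq_left_iff.mp h1
  have := max_eq_left_iff.mp h2
  linarith
end

section
/- Let Q ∈ ℝ^{n×n}, with a_{i,j} := Q_{i,j} + Q_{j,i} for i ≠ j, a_{i,i} := Q_{i,i}, and S_{i,j} := Σ_{k ≠ i,j} max{0, a_{j,k} − a_{i,k}} + a_{j,j} − a_{i,i}. Define the edge set E := { (i, j) : i ≠ j, S_{i,j} ≤ 0, and (S_{j,i} ≤ 0 implies i < j) }. Then the directed graph G = (V, E) on V = {1,…,n} contains no directed cycle, i.e., G is a directed acyclic graph and hence an order of the n binary variables. -/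
open Finset

/-- The edge set extracted from `Q`:
`E = {(i,j) : i ≠ j, S_{i,j} ≤ 0, and (S_{j,i} ≤ 0 → i < j)}`. -/
noncomputable def ordE (n : ℕ) (Q : Matrix (Fin n) (Fin n) ℝ) :
    Finset (Fin n × Fin n) :=
  univ.filter (fun p : Fin n × Fin n =>
    p.1 ≠ p.2 ∧ Sval n Q p.1 p.2 ≤ 0 ∧ (Sval n Q p.2 p.1 ≤ 0 → p.1 < p.2))

/-!
With the row sums `g i = ∑ₖ a_{i,k}` of the symmetric coefficient matrix, and since
`max 0 d - max 0 (-d) = d`, one has `S_{i,j} ≥ g j - g i` and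
`S_{i,j} - S_{j,i} = (g j - g i) + (a_{j,j} - a_{i,i})`. Along an edge `i → j` this gives
`g j ≤ g i`; if `g j = g i` then `S_{j,i} ≥ 0` forces `a_{j,j} ≤ a_{i,i}`, and if also
`a_{j,j} = a_{i,i}` then `S_{j,i} = S_{i,j} ≤ 0`, so `i < j`. Thus the key
`(g, a_{·,·}, index with reversed order)` strictly decreases lexicographically along edges.
-/

theorem Relation.TransGen.lt_of_map_lt {α β : Type*} [Preorder β] {r : α → α → Prop}
    (f : α → β) (hf : ∀ a b, r a b → f b < f a) {a b : α} (hab : Relation.TransGen r a b) :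
    f b < f a := by
  induction hab with
  | single hr => exact hf _ _ hr
  | tail _ hr ih => exact (hf _ _ hr).trans ih

namespace QuboOrder

variable {n : ℕ} (Q : Matrix (Fin n) (Fin n) ℝ)

lemma aCoef_comm (i j : Fin n) : aCoef n Q i j = aCoef n Q j i := by
  unfold aCoef
  rcases eq_or_ne i j with rfl | h
  · rfl
  · simp only [h, h.symm, if_false, add_comm]

noncomputable def rowSum (i : Fin n) : ℝ := ∑ k, aCoef n Q i k

lemma filter_ne_and_ne_comm (i j : Fin n) :
    univ.filter (fun k => k ≠ j ∧ k ≠ i) = univ.filter (fun k => k ≠ i ∧ k ≠ j) :=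
  filter_congr fun _ _ => and_comm

lemma rowSum_sub_rowSum {i j : Fin n} (hij : i ≠ j) :
    rowSum Q j - rowSum Q i =
      ∑ k ∈ univ.filter (fun k => k ≠ i ∧ k ≠ j), (aCoef n Q j k - aCoef n Q i k)
        + aCoef n Q j j - aCoef n Q i i := by
  have hpair : univ.filter (fun k => ¬(k ≠ i ∧ k ≠ j)) = {i, j} := by
    ext k; simp [or_iff_not_and_not]
  rw [rowSum, rowSum, ← sum_sub_distrib,
    ← sum_filter_add_sum_filter_not univ (fun k => k ≠ i ∧ k ≠ j), hpair, sum_pair hij,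
    aCoef_comm Q j i]
  ring

lemma rowSum_sub_le_Sval {i j : Fin n} (hij : i ≠ j) :
    rowSum Q j - rowSum Q i ≤ Sval n Q i j := by
  rw [rowSum_sub_rowSum Q hij, Sval]
  gcongr with k
  exact le_max_right _ _

lemma Sval_sub_Sval {i j : Fin n} (hij : i ≠ j) :
    Sval n Q i j - Sval n Q j i =
      rowSum Q j - rowSum Q i + (aCoef n Q j j - aCoef n Q i i) := by
  rw [rowSum_sub_rowSum Q hij, Sval, Sval, filter_ne_and_ne_comm i j]
  have hpart : ∑ k ∈ univ.filter (fun k => k ≠ i ∧ k ≠ j),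
      (max 0 (aCoef n Q j k - aCoef n Q i k) - max 0 (aCoef n Q i k - aCoef n Q j k)) =
        ∑ k ∈ univ.filter (fun k => k ≠ i ∧ k ≠ j), (aCoef n Q j k - aCoef n Q i k) :=
    sum_congr rfl fun k _ => by
      rw [← neg_sub (aCoef n Q j k), max_comm 0, max_comm 0]
      exact max_zero_sub_max_neg_zero_eq_self _
  rw [sum_sub_distrib] at hpart
  linarith

/-- The index enters in reversed order, so that the tie-break `i < j` of `ordE` is a descent. -/
noncomputable def potential (i : Fin n) : ℝ ×ₗ ℝ ×ₗ (Fin n)ᵒᵈ :=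
  toLex (rowSum Q i, toLex (aCoef n Q i i, OrderDual.toDual i))

lemma potential_lt_of_mem_ordE {i j : Fin n} (h : (i, j) ∈ ordE n Q) :
    potential Q j < potential Q i := by
  simp only [ordE, mem_filter, mem_univ, true_and] at h
  obtain ⟨hij, hSij, htie⟩ := h
  have hg := rowSum_sub_le_Sval Q hij
  have hg' := rowSum_sub_le_Sval Q hij.symm
  have hdiff := Sval_sub_Sval Q hij
  refine Prod.Lex.toLex_lt_toLex'.2 ⟨by linarith, fun hgeq => ?_⟩
  refine Prod.Lex.toLex_lt_toLex'.2 ⟨by linarith, fun haeq => ?_⟩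
  exact OrderDual.toDual_lt_toDual.2 (htie (by linarith))

end QuboOrder

theorem stmt13 (n : ℕ) (Q : Matrix (Fin n) (Fin n) ℝ) :
    IsAcyclicEdges n (ordE n Q) := fun _ hcycle =>
  lt_irrefl _ (hcycle.lt_of_map_lt (QuboOrder.potential Q)
    fun _ _ => QuboOrder.potential_lt_of_mem_ordE Q)
end

section
/- Let Q ∈ ℝ^{n×n}, φ(x) = x^⊤ Q x, a_{i,j} := Q_{i,j} + Q_{j,i} for i ≠ j, a_{i,i} := Q_{i,i}, and S_{i,j} := Σ_{k ≠ i,j} max{0, a_{j,k} − a_{i,k}} + a_{j,j} − a_{i,i}. Let m be a positive integer and let w_{k,i} and C_k (k = 1,…,m, i = 1,…,n) be positive reals, defining the feasible set C := { x ∈ {0,1}^n : Σ_i w_{k,i} x_i ≤ C_k for all k = 1,…,m }. Let G = (V, E) be an order of the n binary variables such that for every edge (i,j) ∈ E one has S_{i,j} ≤ 0 and w_{k,i} ≥ w_{k,j} for all k = 1,…,m. Assume C is nonempty. Then min { φ(x) : x ∈ C } = min { φ(x) : x ∈ C ∩ B_n^G }; in fact, for every x ∈ C there exists x̃ ∈ C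 ∩ B_n^G with φ(x̃) ≤ φ(x). -/
open Finset

/-- Feasible set of the knapsack constraints:
binary vectors with `∑ i w_{k,i} x_i ≤ C_k` for every `k`. -/
def Kfeas (n m : ℕ) (w : Fin m → Fin n → ℝ) (C : Fin m → ℝ) : Set (Fin n → ℝ) :=
  {x | x ∈ Bset n ∧ ∀ k : Fin m, (∑ i, w k i * x i) ≤ C k}

/-!
If a feasible `x` violates an edge `(i, j)`, i.e. `x i = 1` and `x j = 0`, move its one from `i`
to `j`. The knapsack constraints survive because `w k j ≤ w k i`, and `φ` changes by
`∑_{k ≠ i,j} (a_{j,k} - a_{i,k}) x_k + a_{j,j} - a_{i,i} ≤ S_{i,j} ≤ 0`. Acyclicity provides ranks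
that strictly decrease along edges, so the sum of the ranks of the support of `x` strictly
decreases and the repair ends in `B_n^G`. Every feasible value of `φ` is thus dominated by an
ordered one, which gives the equality of the infima.
-/

open Function

section Exchange

variable {n : ℕ}

lemma update_mem_Bset {y : Fin n → ℝ} (hy : y ∈ Bset n) (i : Fin n) {t : ℝ} (ht : t = 0 ∨ t = 1) :
    update y i t ∈ Bset n := by
  intro q
  rcases eq_or_ne q i with rfl | hq
  · simpa using ht
  · simpa [hq] using hy q

lemma sum_mul_update_one (w y : Fin n → ℝ) {i : Fin n} (hyi : y i = 0) :
    ∑ p, w p * update y i 1 p = ∑ p, w p * y p + w i := by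
  simp [update_apply, sum_ite, filter_ne', filter_eq', hyi, add_comm]

lemma quadForm_update_one (Q : Matrix (Fin n) (Fin n) ℝ) {y : Fin n → ℝ} {i : Fin n}
    (hyi : y i = 0) :
    quadForm n Q (update y i 1) = quadForm n Q y + ∑ q, aCoef n Q i q * y q + aCoef n Q i i := by
  have hz : ∀ p, update y i 1 p = y p + if p = i then 1 else 0 := by
    intro p; rcases eq_or_ne p i with rfl | hp <;> simp [*]
  have ha : ∀ q, aCoef n Q i q * y q = Q i q * y q + Q q i * y q := by
    intro q
    rcases eq_or_ne i q with rfl | hq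
    · simp [hyi]
    · simp [aCoef, hq, add_mul]
  simp only [quadForm, hz, ha, mul_add, add_mul, sum_add_distrib, mul_ite, ite_mul, mul_one,
    mul_zero, zero_mul, sum_ite_irrel, sum_const_zero, sum_ite_eq',
    mem_univ, if_true, show aCoef n Q i i = Q i i from if_pos rfl]
  ring

lemma quadForm_update_one_le_add_Sval (Q : Matrix (Fin n) (Fin n) ℝ) {y : Fin n → ℝ}
    (hy : y ∈ Bset n) {i j : Fin n} (hyi : y i = 0) (hyj : y j = 0) :
    quadForm n Q (update y j 1) ≤ quadForm n Q (update y i 1) + Sval n Q i j := by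
  set D := univ.filter fun q => q ≠ i ∧ q ≠ j
  have hD : ∑ q, (aCoef n Q j q - aCoef n Q i q) * y q
      = ∑ q ∈ D, (aCoef n Q j q - aCoef n Q i q) * y q := by
    refine (sum_subset (subset_univ D) fun q _ hq => ?_).symm
    rcases eq_or_ne q i with rfl | hqi
    · simp [hyi]
    · simp only [D, mem_filter, mem_univ, true_and, not_and, not_not] at hq
      rw [hq hqi, hyj, mul_zero]
  have hle : ∑ q ∈ D, (aCoef n Q j q - aCoef n Q i q) * y q
      ≤ ∑ q ∈ D, max 0 (aCoef n Q j q - aCoef n Q i q) := by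
    refine sum_le_sum fun q _ => ?_
    rcases hy q with h | h <;> simp [h]
  have hsum := hD.trans_le hle
  simp only [sub_mul, sum_sub_distrib] at hsum
  rw [quadForm_update_one Q hyi, quadForm_update_one Q hyj, Sval]
  linarith

lemma update_one_mem_Kfeas_of_le {m : ℕ} {w : Fin m → Fin n → ℝ} {C : Fin m → ℝ}
    {y : Fin n → ℝ} (hy : y ∈ Bset n) {i j : Fin n} (hyi : y i = 0) (hyj : y j = 0)
    (hw : ∀ k, w k j ≤ w k i) (h : update y i 1 ∈ Kfeas n m w C) :
    update y j 1 ∈ Kfeas n m w C := by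
  refine ⟨update_mem_Bset hy j (Or.inr rfl), fun k => ?_⟩
  have hk := h.2 k
  rw [sum_mul_update_one _ _ hyi] at hk
  rw [sum_mul_update_one _ _ hyj]
  linarith [hw k]

noncomputable def rankPotential (r : Fin n → ℕ) (x : Fin n → ℝ) : ℕ :=
  ∑ p ∈ univ.filter (fun p => x p = 1), r p

lemma rankPotential_update_one (r : Fin n → ℕ) {y : Fin n → ℝ} {i : Fin n} (hyi : y i ≠ 1) :
    rankPotential r (update y i 1) = r i + rankPotential r y := by
  have : univ.filter (fun p => update y i 1 p = 1) = insert i (univ.filter fun p => y p = 1) := by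
    ext q; rcases eq_or_ne q i with rfl | hq <;> simp [*]
  rw [rankPotential, this, sum_insert (by simp [hyi]), rankPotential]

lemma IsAcyclicEdges.exists_rank {E : Finset (Fin n × Fin n)} (hE : IsAcyclicEdges n E) :
    ∃ r : Fin n → ℕ, ∀ e ∈ E, r e.2 < r e.1 := by
  classical
  let R := fun a b => (a, b) ∈ E
  refine ⟨fun i => #(univ.filter (Relation.TransGen R i ·)), fun e he => card_lt_card ?_⟩
  refine ⟨fun k hk => ?_, fun hsub => hE e.2 ?_⟩
  · simp only [mem_filter, mem_univ, true_and] at hk ⊢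
    exact Relation.TransGen.head he hk
  · simpa using hsub (by simpa using Relation.TransGen.single he)

theorem exists_mem_Kfeas_inter_BsetG_quadForm_le {m : ℕ} {Q : Matrix (Fin n) (Fin n) ℝ}
    {w : Fin m → Fin n → ℝ} {C : Fin m → ℝ} {E : Finset (Fin n × Fin n)} (hdag : IsAcyclicEdges n E)
    (hE : ∀ e ∈ E, Sval n Q e.1 e.2 ≤ 0 ∧ ∀ k : Fin m, w k e.2 ≤ w k e.1) :
    ∀ x ∈ Kfeas n m w C, ∃ y ∈ Kfeas n m w C ∩ BsetG n E, quadForm n Q y ≤ quadForm n Q x := by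
  obtain ⟨r, hr⟩ := hdag.exists_rank
  intro x hx
  induction hN : rankPotential r x using Nat.strong_induction_on generalizing x with
  | _ N ih =>
    by_cases hG : ∀ e ∈ E, x e.1 = 1 → x e.2 = 1
    · exact ⟨x, ⟨hx, hx.1, hG⟩, le_rfl⟩
    push Not at hG
    obtain ⟨⟨i, j⟩, he, hxi, hxj⟩ := hG
    have hxj : x j = 0 := (hx.1 j).resolve_right hxj
    have hij : i ≠ j := by rintro rfl; simp [hxi] at hxj
    obtain ⟨y, hy, hyi, rfl⟩ : ∃ y ∈ Bset n, y i = 0 ∧ update y i 1 = x :=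
      ⟨update x i 0, update_mem_Bset hx.1 i (Or.inl rfl), update_self .., by simp [← hxi]⟩
    have hyj : y j = 0 := by simpa [hij.symm] using hxj
    have hlt : rankPotential r (update y j 1) < N := by
      rw [← hN, rankPotential_update_one r (by simp [hyj]), rankPotential_update_one r (by simp [hyi])]
      exact Nat.add_lt_add_right (hr _ he) _
    obtain ⟨z, hz, hzle⟩ := ih _ hlt _ (update_one_mem_Kfeas_of_le hy hyi hyj (hE _ he).2 hx) rfl
    have hswap := quadForm_update_one_le_add_Sval Q hy hyi hyj
    exact ⟨z, hz, by linarith [(hE _ he).1]⟩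

end Exchange

theorem stmt15_general (n m : ℕ) (Q : Matrix (Fin n) (Fin n) ℝ)
    (w : Fin m → Fin n → ℝ) (C : Fin m → ℝ)
    (E : Finset (Fin n × Fin n)) (hdag : IsAcyclicEdges n E)
    (hE : ∀ e ∈ E, Sval n Q e.1 e.2 ≤ 0 ∧ ∀ k : Fin m, w k e.2 ≤ w k e.1) :
    sInf (quadForm n Q '' Kfeas n m w C) =
        sInf (quadForm n Q '' (Kfeas n m w C ∩ BsetG n E)) ∧
      ∀ x ∈ Kfeas n m w C, ∃ y ∈ Kfeas n m w C ∩ BsetG n E,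
        quadForm n Q y ≤ quadForm n Q x := by
  have hle := exists_mem_Kfeas_inter_BsetG_quadForm_le (C := C) hdag hE
  refine ⟨csInf_eq_csInf_of_forall_exists_le ?_ ?_, hle⟩
  · rintro _ ⟨x, hx, rfl⟩
    obtain ⟨y, hy, hyx⟩ := hle x hx
    exact ⟨_, ⟨y, hy, rfl⟩, hyx⟩
  · rintro _ ⟨y, hy, rfl⟩
    exact ⟨_, ⟨y, hy.1, rfl⟩, le_rfl⟩

theorem stmt15 (n m : ℕ) (hm : 0 < m) (Q : Matrix (Fin n) (Fin n) ℝ)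
    (w : Fin m → Fin n → ℝ) (C : Fin m → ℝ)
    (hw : ∀ k i, 0 < w k i) (hC : ∀ k, 0 < C k)
    (E : Finset (Fin n × Fin n)) (hdag : IsAcyclicEdges n E)
    (hE : ∀ e ∈ E, Sval n Q e.1 e.2 ≤ 0 ∧ ∀ k : Fin m, w k e.2 ≤ w k e.1)
    (hne : (Kfeas n m w C).Nonempty) :
    sInf (quadForm n Q '' Kfeas n m w C) =
        sInf (quadForm n Q '' (Kfeas n m w C ∩ BsetG n E)) ∧
      ∀ x ∈ Kfeas n m w C, ∃ y ∈ Kfeas n m w C ∩ BsetG n E,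
        quadForm n Q y ≤ quadForm n Q x :=
  stmt15_general n m Q w C E hdag hE
end
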